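/- arXiv:1612.05427 — 2 statements merged into one kernel-verified Lean document; each statement's English description precedes it below -/
import Mathlib

section
/- Orthogonality identity (A) of Appendix A. For all i, j ∈ {2,…,m} with i ≠ j and every θ = (θ_2,…,θ_m) ∈ ℝ^{m−1}, one has ⟨e_j, A_i(θ) e_1⟩ = 0, where ⟨·,·⟩ is the Euclidean inner product on ℝ^m. -/
open Real

/-- The `m × m` rotation matrix rotating the plane spanned by the basis vectors
with indices `0` and `i` (the paper's `e_1` and `e_{i+1}`) by an angle `a`,
leaving all other directions invariant. -/
noncomputable def rotMat (m : ℕ) (i : ℕ) (a : ℝ) : Matrix (Fin m) (Fin m) ℝ :=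
  Matrix.of fun k l =>
    if (k : ℕ) = 0 ∧ (l : ℕ) = 0 then Real.cos a
    else if (k : ℕ) = 0 ∧ (l : ℕ) = i then -Real.sin a
    else if (k : ℕ) = i ∧ (l : ℕ) = 0 then Real.sin a
    else if (k : ℕ) = i ∧ (l : ℕ) = i then Real.cos a
    else if k = l then 1 else 0

/-- `R_θ = R_2(θ_2) R_3(θ_3) ⋯ R_m(θ_m)`.  Here the paper's basis vector `e_j`
(`j ∈ {1,…,m}`) is the Lean basis vector with index `j - 1 : Fin m`, so the
paper's rotation `R_j(θ_j)` of the `(e_1, e_j)`-plane is `rotMat m (j-1) (θ j)`.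
Only the values `θ 2, …, θ m` of `θ : ℕ → ℝ` are relevant. -/
noncomputable def Rtheta (m : ℕ) (θ : ℕ → ℝ) : Matrix (Fin m) (Fin m) ℝ :=
  ((List.range (m - 1)).map fun k => rotMat m (k + 1) (θ (k + 2))).prod

/-- The entrywise partial derivative `∂R_θ/∂θ_j`. -/
noncomputable def dRtheta (m : ℕ) (θ : ℕ → ℝ) (j : ℕ) : Matrix (Fin m) (Fin m) ℝ :=
  Matrix.of fun k l => deriv (fun a => Rtheta m (Function.update θ j a) k l) (θ j)

/-- `A_j(θ) = R_θ⁻¹ ∂R_θ/∂θ_j`. -/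
noncomputable def Amat (m : ℕ) (θ : ℕ → ℝ) (j : ℕ) : Matrix (Fin m) (Fin m) ℝ :=
  (Rtheta m θ)⁻¹ * dRtheta m θ j

/-! Split `R_θ = L · R_i(θ_i) · P`, where `P` collects the rotations `R_k` with `k > i`. Since
`R_i(b) = R_i(a) R_i(b - a)`, the derivative of `R_i` at `a` is `R_i(a) G` for the generator `G`
(`e_1 ↦ e_i`, `e_i ↦ -e_1`), so `A_i(θ) = P⁻¹ G P`. The rotations in `P` fix `e_i` and never touch
the `i`-th coordinate; hence `G P e_1` is a multiple of `e_i`, and so is `A_i(θ) e_1`. -/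

open Matrix

lemma Matrix.hasDerivAt_mul_mul_apply {𝕜 ι κ μ ν : Type*} [NontriviallyNormedField 𝕜]
    [Fintype κ] [Fintype μ] (L : Matrix ι κ 𝕜) (P : Matrix μ ν 𝕜) {B : 𝕜 → Matrix κ μ 𝕜}
    {B' : Matrix κ μ 𝕜} {a : 𝕜} (hB : ∀ k l, HasDerivAt (fun b => B b k l) (B' k l) a)
    (i : ι) (j : ν) : HasDerivAt (fun b => (L * B b * P) i j) ((L * B' * P) i j) a := by
  simp only [mul_apply]
  exact HasDerivAt.fun_sum fun y _ =>
    (HasDerivAt.fun_sum fun x _ => (hB x y).const_mul _).mul_const _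

section rotation

variable {m : ℕ} [NeZero m] (q : Fin m)

noncomputable def rotGen : Matrix (Fin m) (Fin m) ℝ := single q 0 1 - single 0 q 1

variable {q}

lemma rotMat_eq (hq : q ≠ 0) (a : ℝ) :
    rotMat m q a = 1 + (cos a - 1) • (single 0 0 1 + single q q 1) + sin a • rotGen q := by
  ext k l
  simp only [rotMat, rotGen, of_apply, Matrix.add_apply, Matrix.smul_apply, Matrix.sub_apply,
    one_apply, single_apply, smul_eq_mul, Fin.ext_iff, Fin.val_zero]
  have : (q : ℕ) ≠ 0 := Fin.val_ne_iff.mpr hq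
  split_ifs <;> first | omega | ring

lemma rotMat_mulVec (hq : q ≠ 0) (a : ℝ) (v : Fin m → ℝ) :
    rotMat m q a *ᵥ v = fun k =>
      if k = 0 then cos a * v 0 - sin a * v q
      else if k = q then sin a * v 0 + cos a * v q else v k := by
  ext k
  simp only [rotMat_eq hq, rotGen, smul_add, smul_single, smul_eq_mul, mul_one, add_mulVec,
    one_mulVec, single_mulVec, smul_mulVec, sub_mulVec, one_mul, Pi.add_apply, Pi.sub_apply,
    Pi.smul_apply, Pi.zero_apply, Function.update_apply]
  split_ifs <;> subst_vars <;> simp_all <;> ring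

lemma rotMat_mul_rotMat (hq : q ≠ 0) (a b : ℝ) :
    rotMat m q a * rotMat m q b = rotMat m q (a + b) := by
  refine ext_iff_mulVec.mpr fun v => ?_
  ext k
  simp only [← mulVec_mulVec, rotMat_mulVec hq, if_pos, if_neg hq.symm, cos_add, sin_add]
  split_ifs <;> ring

lemma rotMat_zero (hq : q ≠ 0) : rotMat m q 0 = 1 := by
  simp [rotMat_eq hq]

lemma isUnit_det_rotMat (hq : q ≠ 0) (a : ℝ) : IsUnit (rotMat m q a).det :=
  isUnit_det_of_right_inverse (B := rotMat m q (-a)) <| by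
    rw [rotMat_mul_rotMat hq, add_neg_cancel, rotMat_zero hq]

lemma hasDerivAt_rotMat_apply (hq : q ≠ 0) (a : ℝ) (k l : Fin m) :
    HasDerivAt (fun b => rotMat m q b k l) ((rotMat m q a * rotGen q) k l) a := by
  have hgen : ∀ k l, HasDerivAt (fun b => rotMat m q b k l) (rotGen q k l) (a - a) := by
    intro k l
    simp only [sub_self, rotMat_eq hq, Matrix.add_apply, Matrix.smul_apply, smul_eq_mul]
    simpa using (((hasDerivAt_cos 0).sub_const 1).mul_const (single 0 0 1 k l + single q q 1 k l)
      |>.const_add ((1 : Matrix (Fin m) (Fin m) ℝ) k l)).fun_add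
        ((hasDerivAt_sin 0).mul_const (rotGen q k l))
  simpa [rotMat_mul_rotMat hq] using
    hasDerivAt_mul_mul_apply (rotMat m q a) 1 (fun k l => (hgen k l).comp_sub_const a a) k l

lemma rotMat_mulVec_apply_of_ne (hq : q ≠ 0) (a : ℝ) (v : Fin m → ℝ) {x : Fin m} (hx : x ≠ 0)
    (hxq : x ≠ q) : (rotMat m q a *ᵥ v) x = v x := by
  simp [rotMat_mulVec hq, hx, hxq]

lemma rotMat_mulVec_single_of_ne (hq : q ≠ 0) (a c : ℝ) {x : Fin m} (hx : x ≠ 0) (hxq : x ≠ q) :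
    rotMat m q a *ᵥ Pi.single x c = Pi.single x c := by
  ext k
  simp only [rotMat_mulVec hq, Pi.single_apply, if_neg hx.symm, if_neg hxq.symm]
  split_ifs <;> simp_all

lemma rotGen_mulVec (w : Fin m → ℝ) : rotGen q *ᵥ w = Pi.single q (w 0) - Pi.single 0 (w q) := by
  ext k
  simp [rotGen, sub_mulVec, single_mulVec, Function.update_apply, Pi.single_apply]

end rotation

lemma Matrix.list_prod_mulVec_mem {ι R : Type*} [Fintype ι] [DecidableEq ι] [Semiring R]
    (s : List (Matrix ι ι R)) {S : Set (ι → R)} (hS : ∀ M ∈ s, ∀ v ∈ S, M *ᵥ v ∈ S)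
    {v : ι → R} (hv : v ∈ S) : s.prod *ᵥ v ∈ S := by
  induction s with
  | nil => simpa using hv
  | cons M s ih =>
    rw [List.prod_cons, ← mulVec_mulVec]
    exact hS M (by simp) _ (ih fun N hN => hS N (by simp [hN]))

noncomputable def rotProd (m : ℕ) (θ : ℕ → ℝ) (l : List ℕ) : Matrix (Fin m) (Fin m) ℝ :=
  (l.map fun k => rotMat m (k + 1) (θ (k + 2))).prod

section rotProd

variable {m : ℕ} (θ : ℕ → ℝ)

lemma rotProd_append (l₁ l₂ : List ℕ) :
    rotProd m θ (l₁ ++ l₂) = rotProd m θ l₁ * rotProd m θ l₂ := by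
  simp [rotProd]

lemma rotProd_congr {θ' : ℕ → ℝ} {l : List ℕ} (h : ∀ k ∈ l, θ (k + 2) = θ' (k + 2)) :
    rotProd m θ l = rotProd m θ' l := by
  simp only [rotProd]
  congr 1
  exact List.map_congr_left fun k hk => by rw [h k hk]

variable {θ}

lemma isUnit_det_rotProd [NeZero m] {l : List ℕ} (hl : ∀ k ∈ l, k + 1 < m) :
    IsUnit (rotProd m θ l).det := by
  rw [← isUnit_iff_isUnit_det]
  refine List.prod_isUnit fun M hM => ?_
  obtain ⟨k, hk, rfl⟩ := List.mem_map.mp hM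
  exact (isUnit_iff_isUnit_det _).mpr
    (isUnit_det_rotMat (q := ⟨k + 1, hl k hk⟩) (Fin.ne_of_val_ne k.succ_ne_zero) _)

lemma rotProd_mulVec_apply [NeZero m] {l : List ℕ} (x : Fin m) (hx : x ≠ 0)
    (hl : ∀ k ∈ l, k + 1 < m ∧ k + 1 ≠ x) (v : Fin m → ℝ) :
    (rotProd m θ l *ᵥ v) x = v x := by
  refine list_prod_mulVec_mem _ (S := {u | u x = v x}) (fun M hM u hu => ?_) rfl
  obtain ⟨k, hk, rfl⟩ := List.mem_map.mp hM
  obtain ⟨hkm, hkx⟩ := hl k hk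
  exact (rotMat_mulVec_apply_of_ne (q := ⟨k + 1, hkm⟩) (Fin.ne_of_val_ne k.succ_ne_zero) _ u hx
    (Fin.ne_of_val_ne hkx.symm)).trans hu

lemma rotProd_mulVec_single [NeZero m] {l : List ℕ} (x : Fin m) (hx : x ≠ 0)
    (hl : ∀ k ∈ l, k + 1 < m ∧ k + 1 ≠ x) (c : ℝ) :
    rotProd m θ l *ᵥ Pi.single x c = Pi.single x c := by
  refine list_prod_mulVec_mem _ (S := {Pi.single x c}) (fun M hM u hu => ?_) rfl
  obtain ⟨k, hk, rfl⟩ := List.mem_map.mp hM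
  obtain ⟨hkm, hkx⟩ := hl k hk
  rw [Set.mem_singleton_iff.mp hu]
  exact rotMat_mulVec_single_of_ne (q := ⟨k + 1, hkm⟩) (Fin.ne_of_val_ne k.succ_ne_zero) _ c hx
    (Fin.ne_of_val_ne hkx.symm)

end rotProd

section factorization

variable {m : ℕ} [NeZero m] (θ : ℕ → ℝ) {q : Fin m}

lemma Rtheta_eq_mul (hq : q ≠ 0) :
    Rtheta m θ = rotProd m θ (List.range (q - 1)) * rotMat m q (θ (q + 1)) *
      rotProd m θ (List.range' q (m - 1 - q)) := by
  have hq1 : 1 ≤ (q : ℕ) := Nat.one_le_iff_ne_zero.mpr (Fin.val_ne_iff.mpr hq)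
  have hsplit : List.range (m - 1) =
      List.range (q - 1) ++ [(q : ℕ) - 1] ++ List.range' q (m - 1 - q) := by
    obtain ⟨r, hr⟩ : ∃ r, m - 1 = q + r := ⟨m - 1 - q, by omega⟩
    rw [hr, Nat.add_sub_cancel_left, ← List.range_succ, Nat.succ_eq_add_one,
      Nat.sub_add_cancel hq1, List.range_eq_range', List.range_eq_range']
    simpa using (List.range'_append_1 (s := 0) (m := q) (n := r)).symm
  have hlast : rotProd m θ [q - 1] = rotMat m q (θ (q + 1)) := by
    simp [rotProd, Nat.sub_add_cancel hq1, show (q : ℕ) - 1 + 2 = q + 1 by omega]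
  rw [Rtheta, hsplit, ← rotProd, rotProd_append, rotProd_append, hlast]

lemma Rtheta_update (hq : q ≠ 0) (b : ℝ) :
    Rtheta m (Function.update θ (q + 1) b) = rotProd m θ (List.range (q - 1)) * rotMat m q b *
      rotProd m θ (List.range' q (m - 1 - q)) := by
  have hL : rotProd m (Function.update θ (q + 1) b) (List.range (q - 1)) =
      rotProd m θ (List.range (q - 1)) :=
    rotProd_congr _ fun k hk => Function.update_of_ne (by rw [List.mem_range] at hk; omega) _ _
  have hP : rotProd m (Function.update θ (q + 1) b) (List.range' q (m - 1 - q)) =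
      rotProd m θ (List.range' q (m - 1 - q)) :=
    rotProd_congr _ fun k hk => Function.update_of_ne (by rw [List.mem_range'_1] at hk; omega) _ _
  rw [Rtheta_eq_mul _ hq, Function.update_self, hL, hP]

lemma dRtheta_eq (hq : q ≠ 0) :
    dRtheta m θ (q + 1) =
      rotProd m θ (List.range (q - 1)) * (rotMat m q (θ (q + 1)) * rotGen q) *
        rotProd m θ (List.range' q (m - 1 - q)) := by
  ext k l
  simp only [dRtheta, of_apply, Rtheta_update _ hq]
  exact (hasDerivAt_mul_mul_apply _ _ (hasDerivAt_rotMat_apply hq _) k l).deriv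

lemma Amat_eq_conj (hq : q ≠ 0) :
    Amat m θ (q + 1) = (rotProd m θ (List.range' q (m - 1 - q)))⁻¹ * rotGen q *
      rotProd m θ (List.range' q (m - 1 - q)) := by
  have hL : IsUnit (rotProd m θ (List.range (q - 1))).det :=
    isUnit_det_rotProd fun k hk => by rw [List.mem_range] at hk; omega
  rw [Amat, dRtheta_eq _ hq, Rtheta_eq_mul _ hq, Matrix.mul_inv_rev, Matrix.mul_inv_rev]
  simp only [Matrix.mul_assoc, nonsing_inv_mul_cancel_left _ _ hL,
    nonsing_inv_mul_cancel_left _ _ (isUnit_det_rotMat hq _)]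

lemma Amat_mulVec_single_zero (hq : q ≠ 0) :
    Amat m θ (q + 1) *ᵥ Pi.single 0 1 =
      Pi.single q ((rotProd m θ (List.range' q (m - 1 - q)) *ᵥ Pi.single 0 1) 0) := by
  set P := rotProd m θ (List.range' q (m - 1 - q))
  have hP : ∀ k ∈ List.range' q (m - 1 - q), k + 1 < m ∧ k + 1 ≠ q := fun k hk => by
    rw [List.mem_range'_1] at hk; omega
  have hPq : (P *ᵥ Pi.single 0 1) q = 0 := by
    rw [rotProd_mulVec_apply q hq hP, Pi.single_eq_of_ne hq]
  have hPinv : ∀ c, P⁻¹ *ᵥ Pi.single q c = Pi.single q c := fun c => by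
    conv_lhs => rw [← rotProd_mulVec_single (θ := θ) q hq hP c]
    rw [mulVec_mulVec, nonsing_inv_mul _ (isUnit_det_rotProd fun k hk => (hP k hk).1),
      one_mulVec]
  rw [Amat_eq_conj _ hq, ← mulVec_mulVec, ← mulVec_mulVec, rotGen_mulVec, hPq, Pi.single_zero,
    sub_zero, hPinv]

end factorization

/-- **Orthogonality identity (A)** of Appendix A: for `i, j ∈ {2,…,m}` with
`i ≠ j`, `⟨e_j, A_i(θ) e_1⟩ = 0`, i.e. the `(j-1)`-th Euclidean coordinate of
`A_i(θ) e_1` vanishes. -/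
theorem Amat_e1_coord_ne (m : ℕ) (θ : ℕ → ℝ)
    (i j : ℕ) (hi2 : 2 ≤ i) (him : i ≤ m) (hjm : j ≤ m) (hij : i ≠ j) :
    (Amat m θ i).mulVec (Pi.single (⟨0, by omega⟩ : Fin m) 1) ⟨j - 1, by omega⟩ = 0 := by
  obtain ⟨p, rfl⟩ : ∃ p, i = p + 1 := ⟨i - 1, by omega⟩
  have : NeZero m := ⟨by omega⟩
  have hq : (⟨p, by omega⟩ : Fin m) ≠ 0 := Fin.ne_of_val_ne (by simp; omega)
  rw [show (⟨0, _⟩ : Fin m) = 0 from rfl, Amat_mulVec_single_zero θ hq]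
  exact Pi.single_eq_of_ne (Fin.ne_of_val_ne (by simp; omega)) _
end

section
/- Classification of H¹ solutions of the transformed autonomous ODE (step in the proof of Proposition 1.2). Let w̄ : ℝ → ℝ^m be a C² function belonging to H¹(ℝ, ℝ^m) which satisfies, for all ξ ∈ ℝ, w̄''(ξ) + |w̄(ξ)|^{p−1} w̄(ξ) − (4/(p−1)²) w̄(ξ) = 0, and assume w̄ is not identically zero. Then there exist ξ0 ∈ ℝ and a unit vector Ω ∈ ℝ^m (|Ω| = 1) such that w̄(ξ) = κ0 · cosh(ξ+ξ0)^{−2/(p−1)} · Ω for all ξ ∈ ℝ. -/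
open MeasureTheory Real Set

/-- `κ₀ = (2(p+1)/(p-1)²)^{1/(p-1)}` -/
noncomputable def kappa0 (p : ℝ) : ℝ := (2 * (p + 1) / (p - 1) ^ 2) ^ (1 / (p - 1))

/-!
Since `‖w̄‖²` and its derivative `2⟪w̄, w̄'⟫` are integrable, `w̄` decays at `±∞`. Two quantities
are conserved along the equation: the energy `½‖w̄'‖² + ‖w̄‖^{p+1}/(p+1) - (2/(p-1)²)‖w̄‖²` and the
angular momentum of `w̄` in any fixed plane. Both are integrable over `ℝ`, hence zero. At a maximum
point `s` of `‖w̄‖` we have `w̄(s) ⊥ w̄'(s)`, while zero angular momentum makes `w̄(s)` and `w̄'(s)`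
parallel, so `w̄'(s) = 0`; zero energy then gives `‖w̄(s)‖ = κ₀`. The profile
`κ₀ cosh(ξ - s)^{-2/(p-1)} Ω` with `Ω = w̄(s)/κ₀` solves the same equation with the same data at `s`
and never vanishes; the nonlinearity is smooth away from `0`, so local uniqueness and the
connectedness of `ℝ` give equality everywhere.
-/

open Filter Topology
open scoped RealInnerProductSpace

theorem MeasureTheory.Integrable.of_norm_le_mul_norm {α E F G : Type*} [MeasurableSpace α]
    {μ : Measure α} [NormedAddCommGroup E] [NormedAddCommGroup F] [NormedAddCommGroup G]
    {f : α → E} {g : α → F} {h : α → G}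
    (hf : Integrable (fun x => ‖f x‖ ^ 2) μ) (hg : Integrable (fun x => ‖g x‖ ^ 2) μ)
    (hh : AEStronglyMeasurable h μ) (C : ℝ) (hle : ∀ x, ‖h x‖ ≤ C * (‖f x‖ * ‖g x‖)) :
    Integrable h μ := by
  refine ((hf.add hg).const_mul |C|).mono' hh (.of_forall fun x => (hle x).trans ?_)
  have := two_mul_le_add_sq ‖f x‖ ‖g x‖
  have := mul_nonneg (norm_nonneg (f x)) (norm_nonneg (g x))
  simp only [Pi.add_apply]
  nlinarith [le_abs_self C, abs_nonneg C]

theorem eq_zero_of_integrable_of_const {E : Type*} [NormedAddCommGroup E] {f : ℝ → E}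
    (hf : Integrable f) (hconst : ∀ s t, f s = f t) (t : ℝ) : f t = 0 := by
  rw [show f = fun _ => f t from funext fun s => hconst s t, integrable_const_iff] at hf
  refine hf.resolve_right fun _ => ?_
  exact (measure_lt_top volume univ).ne Real.volume_univ

lemma continuous_of_hasDerivAt {F : Type*} [NormedAddCommGroup F] [NormedSpace ℝ F]
    {f f' : ℝ → F} (hf : ∀ t, HasDerivAt f (f' t) t) : Continuous f :=
  continuous_iff_continuousAt.2 fun t => (hf t).continuousAt

theorem ODE_solution_unique_of_contDiffAt {F : Type*} [NormedAddCommGroup F] [NormedSpace ℝ F]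
    {V : F → F} {f g : ℝ → F}
    (hf : ∀ t, HasDerivAt f (V (f t)) t) (hg : ∀ t, HasDerivAt g (V (g t)) t)
    (hV : ∀ t, ContDiffAt ℝ 1 V (g t)) {t₀ : ℝ} (h : f t₀ = g t₀) : f = g := by
  have hfc := continuous_of_hasDerivAt hf
  have hgc := continuous_of_hasDerivAt hg
  have hopen : IsOpen {t | f t = g t} := isOpen_iff_mem_nhds.2 fun t (ht : f t = g t) => by
    obtain ⟨K, U, hU, hK⟩ := (hV t).exists_lipschitzOnWith
    have hfU : ∀ᶠ s in 𝓝 t, f s ∈ U := hfc.continuousAt.preimage_mem_nhds (ht ▸ hU)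
    have hgU : ∀ᶠ s in 𝓝 t, g s ∈ U := hgc.continuousAt.preimage_mem_nhds hU
    exact ODE_solution_unique_of_eventually (v := fun _ => V) (s := fun _ => U)
      (.of_forall fun _ => hK) (hfU.mono fun s hs => ⟨hf s, hs⟩)
      (hgU.mono fun s hs => ⟨hg s, hs⟩) ht
  have hclopen : IsClopen {t | f t = g t} := ⟨isClosed_eq hfc hgc, hopen⟩
  funext t
  exact eq_univ_iff_forall.1 (hclopen.eq_univ ⟨t₀, h⟩) t

lemma rpow_add_two {x q : ℝ} (hx : 0 ≤ x) (hq : -2 < q) : x ^ (q + 2) = x ^ q * x ^ 2 := by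
  simpa using rpow_add_natCast' hx (y := q) (n := 2) (by norm_num; linarith)

section

variable {E : Type*} [NormedAddCommGroup E] [InnerProductSpace ℝ E] {a q : ℝ} {w w' : ℝ → E}

noncomputable def phaseField (a q : ℝ) (z : E × E) : E × E := (z.2, (a - ‖z.1‖ ^ q) • z.1)

theorem contDiffAt_phaseField (a q : ℝ) {z : E × E} (hz : z.1 ≠ 0) :
    ContDiffAt ℝ 1 (phaseField a q) z :=
  contDiffAt_snd.prodMk <| (contDiffAt_const.sub
    ((contDiffAt_norm ℝ hz).comp z contDiffAt_fst |>.rpow_const_of_ne (norm_ne_zero_iff.2 hz))).smul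
    contDiffAt_fst

theorem tendsto_norm_sq_cocompact_of_integrable (hw : ∀ t, HasDerivAt w (w' t) t)
    (hw'c : Continuous w')
    (hw2 : Integrable fun t => ‖w t‖ ^ 2) (hw'2 : Integrable fun t => ‖w' t‖ ^ 2) :
    Tendsto (fun t => ‖w t‖ ^ 2) (cocompact ℝ) (𝓝 0) := by
  have hderiv : ∀ t, HasDerivAt (fun t => ‖w t‖ ^ 2) (2 * ⟪w t, w' t⟫) t :=
    fun t => (hw t).norm_sq
  have hint : Integrable fun t => 2 * ⟪w t, w' t⟫ := by
    refine hw2.of_norm_le_mul_norm hw'2 ?_ 2 fun t => ?_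
    · exact (continuous_const.mul ((continuous_of_hasDerivAt hw).inner hw'c)).aestronglyMeasurable
    · rw [norm_mul, Real.norm_two]
      exact mul_le_mul_of_nonneg_left (norm_inner_le_norm _ _) zero_le_two
  rw [cocompact_eq_atBot_atTop]
  exact (tendsto_zero_of_hasDerivAt_of_integrableOn_Iic (a := 0) (fun t _ => hderiv t)
    hint.integrableOn hw2.integrableOn).sup
    (tendsto_zero_of_hasDerivAt_of_integrableOn_Ioi (a := 0) (fun t _ => hderiv t)
    hint.integrableOn hw2.integrableOn)

theorem sq_inner_eq_norm_sq_mul_norm_sq_of_integrable {c : ℝ → ℝ}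
    (hw : ∀ t, HasDerivAt w (w' t) t) (hw' : ∀ t, HasDerivAt w' (c t • w t) t)
    (hw2 : Integrable fun t => ‖w t‖ ^ 2) (hw'2 : Integrable fun t => ‖w' t‖ ^ 2) (s : ℝ) :
    ⟪w s, w' s⟫ ^ 2 = ‖w s‖ ^ 2 * ‖w' s‖ ^ 2 := by
  have hinner : ∀ x : E, ∀ {f f' : ℝ → E}, (∀ t, HasDerivAt f (f' t) t) →
      ∀ t, HasDerivAt (fun t => ⟪x, f t⟫) ⟪x, f' t⟫ t :=
    fun x _ _ hf t => ((innerSL ℝ x).hasFDerivAt.comp_hasDerivAt t (hf t))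
  -- the angular momentum of `w` in the plane spanned by `w s` and `w' s`
  set ℓ : ℝ → ℝ := fun t => ⟪w' s, w t⟫ * ⟪w s, w' t⟫ - ⟪w s, w t⟫ * ⟪w' s, w' t⟫
  have hderiv : ∀ t, HasDerivAt ℓ 0 t := fun t => by
    refine (((hinner (w' s) hw t).mul (hinner (w s) hw' t)).sub
      ((hinner (w s) hw t).mul (hinner (w' s) hw' t))).congr_deriv ?_
    simp only [inner_smul_right]
    ring
  have hint : Integrable ℓ := by
    refine hw2.of_norm_le_mul_norm hw'2 ?_ (2 * ‖w s‖ * ‖w' s‖) fun t => ?_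
    · exact (continuous_of_hasDerivAt hderiv).aestronglyMeasurable
    · calc ‖ℓ t‖ ≤ ‖⟪w' s, w t⟫ * ⟪w s, w' t⟫‖ + ‖⟪w s, w t⟫ * ⟪w' s, w' t⟫‖ := norm_sub_le _ _
        _ ≤ ‖w' s‖ * ‖w t‖ * (‖w s‖ * ‖w' t‖) + ‖w s‖ * ‖w t‖ * (‖w' s‖ * ‖w' t‖) := by
            rw [norm_mul, norm_mul]
            gcongr <;> exact norm_inner_le_norm _ _
        _ = 2 * ‖w s‖ * ‖w' s‖ * (‖w t‖ * ‖w' t‖) := by ring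
  have h0 := eq_zero_of_integrable_of_const hint (fun s t => is_const_of_deriv_eq_zero
    (fun t => (hderiv t).differentiableAt) (fun t => (hderiv t).deriv) s t) s
  simp only [ℓ, real_inner_self_eq_norm_sq, real_inner_comm (w s) (w' s)] at h0
  linear_combination h0

noncomputable def energy (a q : ℝ) (x y : E) : ℝ :=
  ‖y‖ ^ 2 / 2 + ‖x‖ ^ (q + 2) / (q + 2) - a * ‖x‖ ^ 2 / 2

theorem energy_eq_energy (hq : -1 < q) (hw : ∀ t, HasDerivAt w (w' t) t)
    (hw' : ∀ t, HasDerivAt w' ((a - ‖w t‖ ^ q) • w t) t) (s t : ℝ) :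
    energy a q (w s) (w' s) = energy a q (w t) (w' t) := by
  have hderiv : ∀ t, HasDerivAt (fun t => energy a q (w t) (w' t)) 0 t := by
    intro t
    have hpow := (hasFDerivAt_norm_rpow (w t) (by linarith : 1 < q + 2)).comp_hasDerivAt t (hw t)
    refine ((((hw' t).norm_sq.div_const 2).add (hpow.div_const (q + 2))).sub
      (((hw t).norm_sq.const_mul a).div_const 2)).congr_deriv ?_
    simp only [FunLike.coe_smul, Pi.smul_apply, innerSL_apply_apply, smul_eq_mul,
      inner_smul_right, add_sub_cancel_right]
    have : q + 2 ≠ 0 := by linarith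
    field_simp
    rw [real_inner_comm]
    ring
  exact is_const_of_deriv_eq_zero (fun t => (hderiv t).differentiableAt)
    (fun t => (hderiv t).deriv) s t

theorem energy_eq_zero (hq : 0 ≤ q) (hw : ∀ t, HasDerivAt w (w' t) t)
    (hw' : ∀ t, HasDerivAt w' ((a - ‖w t‖ ^ q) • w t) t)
    (hw2 : Integrable fun t => ‖w t‖ ^ 2) (hw'2 : Integrable fun t => ‖w' t‖ ^ 2)
    {M : ℝ} (hM : ∀ t, ‖w t‖ ≤ M) (t : ℝ) : energy a q (w t) (w' t) = 0 := by
  have hwc := continuous_of_hasDerivAt hw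
  have hpow : Integrable fun t => ‖w t‖ ^ (q + 2) := by
    refine (hw2.const_mul (M ^ q)).mono' (hwc.norm.rpow_const fun _ => by
      right; linarith).aestronglyMeasurable (.of_forall fun t => ?_)
    rw [Real.norm_of_nonneg (by positivity), rpow_add_two (norm_nonneg (w t)) (by linarith)]
    gcongr
    exact hM t
  exact eq_zero_of_integrable_of_const (((hw'2.div_const 2).add (hpow.div_const (q + 2))).sub
    ((hw2.const_mul a).div_const 2)) (energy_eq_energy (by linarith) hw hw') t

theorem exists_deriv_eq_zero_norm_rpow_eq (hq : 0 ≤ q) (hw : ∀ t, HasDerivAt w (w' t) t)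
    (hw' : ∀ t, HasDerivAt w' ((a - ‖w t‖ ^ q) • w t) t)
    (hw2 : Integrable fun t => ‖w t‖ ^ 2) (hw'2 : Integrable fun t => ‖w' t‖ ^ 2) (hne : w ≠ 0) :
    ∃ s, w' s = 0 ∧ ‖w s‖ ^ q = a * (q + 2) / 2 := by
  obtain ⟨s₀, hs₀⟩ := Function.ne_iff.1 hne
  have hpos : 0 < ‖w s₀‖ ^ 2 := pow_pos (norm_pos_iff.2 hs₀) 2
  have hwc := continuous_of_hasDerivAt hw
  obtain ⟨s, hmax⟩ := (show Continuous fun t => ‖w t‖ ^ 2 by fun_prop).exists_forall_ge' s₀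
    ((tendsto_norm_sq_cocompact_of_integrable hw
      (continuous_of_hasDerivAt hw') hw2 hw'2).eventually (eventually_le_nhds hpos))
  have hws : 0 < ‖w s‖ := by nlinarith [hmax s₀, norm_nonneg (w s)]
  have hperp : ⟪w s, w' s⟫ = 0 := by
    simpa using (IsLocalMax.hasDerivAt_eq_zero (.of_forall hmax) (hw s).norm_sq)
  have hws' : w' s = 0 := by
    have := sq_inner_eq_norm_sq_mul_norm_sq_of_integrable hw hw' hw2 hw'2 s
    rw [hperp] at this
    simpa [hws.ne'] using this
  refine ⟨s, hws', ?_⟩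
  have hE := energy_eq_zero hq hw hw' hw2 hw'2 (M := ‖w s‖)
    (fun t => (pow_le_pow_iff_left₀ (norm_nonneg _) hws.le two_ne_zero).1 (hmax t)) s
  rw [energy, hws', norm_zero, rpow_add_two (norm_nonneg _) (by linarith)] at hE
  have hq2 : q + 2 ≠ 0 := by linarith
  refine mul_right_cancel₀ (pow_pos hws 2).ne' ?_
  field_simp at hE
  linear_combination hE / 2

end

lemma kappa0_pos {p : ℝ} (hp : 1 < p) : 0 < kappa0 p :=
  rpow_pos_of_pos (div_pos (by linarith) (pow_pos (by linarith) 2)) _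

lemma kappa0_rpow {p : ℝ} (hp : 1 < p) : kappa0 p ^ (p - 1) = 2 * (p + 1) / (p - 1) ^ 2 := by
  rw [kappa0, ← rpow_mul (div_pos (by linarith) (pow_pos (by linarith) 2)).le,
    one_div_mul_cancel (by linarith), rpow_one]

lemma hasDerivAt_cosh_rpow (r t : ℝ) :
    HasDerivAt (fun t => cosh t ^ r) (r * cosh t ^ (r - 1) * sinh t) t :=
  (hasDerivAt_rpow_const (Or.inl (cosh_pos t).ne')).comp t (hasDerivAt_cosh t)

lemma hasDerivAt_cosh_rpow_mul_sinh (r t : ℝ) :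
    HasDerivAt (fun t => cosh t ^ r * sinh t)
      ((r + 1) * cosh t ^ (r + 1) - r * cosh t ^ (r - 1)) t := by
  refine ((hasDerivAt_cosh_rpow r t).mul (hasDerivAt_sinh t)).congr_deriv ?_
  have hc := cosh_pos t
  rw [show r + 1 = r - 1 + 2 by ring, rpow_add hc, show r = r - 1 + 1 by ring, rpow_add hc,
    show r - 1 + 1 - 1 = r - 1 by ring, rpow_two, rpow_one]
  linear_combination (-(r - 1 + 1) * cosh t ^ (r - 1)) * cosh_sq t

noncomputable def soliton (p t : ℝ) : ℝ := kappa0 p * cosh t ^ (-(2 / (p - 1)))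

lemma soliton_pos {p : ℝ} (hp : 1 < p) (t : ℝ) : 0 < soliton p t :=
  mul_pos (kappa0_pos hp) (rpow_pos_of_pos (cosh_pos t) _)

lemma soliton_zero (p : ℝ) : soliton p 0 = kappa0 p := by simp [soliton]

lemma hasDerivAt_soliton (p t : ℝ) : HasDerivAt (soliton p)
    (kappa0 p * (-(2 / (p - 1)) * (cosh t ^ (-(2 / (p - 1)) - 1) * sinh t))) t :=
  ((hasDerivAt_cosh_rpow _ t).const_mul (kappa0 p)).congr_deriv (by ring)

lemma deriv_soliton_zero (p : ℝ) : deriv (soliton p) 0 = 0 := by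
  simp [(hasDerivAt_soliton p 0).deriv]

lemma hasDerivAt_deriv_soliton {p : ℝ} (hp : 1 < p) (t : ℝ) : HasDerivAt (deriv (soliton p))
    ((4 / (p - 1) ^ 2 - soliton p t ^ (p - 1)) * soliton p t) t := by
  rw [show deriv (soliton p) = _ from funext fun t => (hasDerivAt_soliton p t).deriv]
  set b := 2 / (p - 1) with hb
  refine (((hasDerivAt_cosh_rpow_mul_sinh (-b - 1) t).const_mul (-b)).const_mul
    (kappa0 p)).congr_deriv ?_
  have hc := cosh_pos t
  have hp1 : p - 1 ≠ 0 := by linarith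
  have hpow : soliton p t ^ (p - 1) = b * (b + 1) * cosh t ^ (-2 : ℝ) := by
    rw [soliton, mul_rpow (kappa0_pos hp).le (rpow_nonneg hc.le _), kappa0_rpow hp,
      ← rpow_mul hc.le, hb]
    congr 1
    · field_simp; ring
    · field_simp
  have e1 : cosh t ^ (-b - 1 + 1) = cosh t ^ (-b) := by ring_nf
  have e2 : cosh t ^ (-b - 1 - 1) = cosh t ^ (-2 : ℝ) * cosh t ^ (-b) := by
    rw [← rpow_add hc]; ring_nf
  have ha : 4 / (p - 1) ^ 2 = b ^ 2 := by rw [hb]; field_simp; norm_num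
  rw [hpow, ha, e1, e2, soliton, ← hb]
  ring

theorem eq_soliton_of_deriv_eq_zero {E : Type*} [NormedAddCommGroup E] [InnerProductSpace ℝ E]
    {p : ℝ} (hp : 1 < p) {w w' : ℝ → E} (hw : ∀ t, HasDerivAt w (w' t) t)
    (hw' : ∀ t, HasDerivAt w' ((4 / (p - 1) ^ 2 - ‖w t‖ ^ (p - 1)) • w t) t)
    {s : ℝ} (hs' : w' s = 0) (hs : ‖w s‖ = kappa0 p) (t : ℝ) :
    w t = soliton p (t - s) • (kappa0 p)⁻¹ • w s := by
  have hκ := kappa0_pos hp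
  set Ω := (kappa0 p)⁻¹ • w s
  have hΩ : ‖Ω‖ = 1 := by
    rw [norm_smul, hs, norm_inv, Real.norm_of_nonneg hκ.le, inv_mul_cancel₀ hκ.ne']
  set g : ℝ → E × E := fun t => (soliton p (t - s) • Ω, deriv (soliton p) (t - s) • Ω)
  have hg : ∀ t, HasDerivAt g (phaseField (4 / (p - 1) ^ 2) (p - 1) (g t)) t := fun t => by
    refine ((((hasDerivAt_soliton p (t - s)).comp_sub_const t s).smul_const Ω).prodMk
      (((hasDerivAt_deriv_soliton hp (t - s)).comp_sub_const t s).smul_const Ω)).congr_deriv ?_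
    simp only [phaseField, g, norm_smul, hΩ, Real.norm_of_nonneg (soliton_pos hp _).le, mul_one,
      smul_smul, (hasDerivAt_soliton p (t - s)).deriv]
  have hf : ∀ t, HasDerivAt (fun t => (w t, w' t)) (phaseField _ _ (w t, w' t)) t :=
    fun t => (hw t).prodMk (hw' t)
  have hgf := ODE_solution_unique_of_contDiffAt hf hg
    (fun t => contDiffAt_phaseField _ _ (smul_ne_zero (soliton_pos hp _).ne' (norm_pos_iff.1 (by
      rw [hΩ]; exact one_pos)))) (t₀ := s) (by
      simp only [g, sub_self, soliton_zero, deriv_soliton_zero, zero_smul, zero_mul, hs', Ω,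
        smul_smul, mul_inv_cancel₀ hκ.ne', one_smul])
  exact congrArg Prod.fst (congrFun hgf t)

theorem ode_classification_general (p : ℝ) (hp : 1 < p) (m : ℕ)
    (wb : ℝ → EuclideanSpace ℝ (Fin m))
    (hreg : ContDiff ℝ 2 wb)
    (hL2 : MeasureTheory.Integrable (fun ξ => ‖wb ξ‖ ^ 2))
    (hL2' : MeasureTheory.Integrable (fun ξ => ‖deriv wb ξ‖ ^ 2))
    (heq : ∀ ξ : ℝ,
      deriv (deriv wb) ξ + ‖wb ξ‖ ^ (p - 1) • wb ξ - (4 / (p - 1) ^ 2) • wb ξ = 0)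
    (hne : wb ≠ 0) :
    ∃ (ξ0 : ℝ) (Ω : EuclideanSpace ℝ (Fin m)), ‖Ω‖ = 1 ∧
      ∀ ξ : ℝ, wb ξ = (kappa0 p * Real.cosh (ξ + ξ0) ^ (-(2 / (p - 1)))) • Ω := by
  have hw : ∀ ξ, HasDerivAt wb (deriv wb ξ) ξ :=
    fun ξ => (hreg.differentiable (by norm_num) ξ).hasDerivAt
  have hw' : ∀ ξ, HasDerivAt (deriv wb) ((4 / (p - 1) ^ 2 - ‖wb ξ‖ ^ (p - 1)) • wb ξ) ξ := by
    intro ξ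
    have hdd : deriv (deriv wb) ξ = (4 / (p - 1) ^ 2 - ‖wb ξ‖ ^ (p - 1)) • wb ξ := by
      rw [sub_smul, ← sub_eq_zero, ← heq ξ]
      abel
    have h1 : ContDiff ℝ 1 (deriv wb) := ((contDiff_succ_iff_deriv (n := 1)).1 hreg).2.2
    exact hdd ▸ (h1.differentiable one_ne_zero ξ).hasDerivAt
  obtain ⟨s, hs', hsq⟩ := exists_deriv_eq_zero_norm_rpow_eq (by linarith) hw hw' hL2 hL2' hne
  have hs : ‖wb s‖ = kappa0 p := by
    rw [kappa0, ← rpow_rpow_inv (norm_nonneg (wb s)) (by linarith : p - 1 ≠ 0), hsq, one_div]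
    congr 1
    field_simp
    ring
  refine ⟨-s, (kappa0 p)⁻¹ • wb s, ?_, fun ξ => ?_⟩
  · rw [norm_smul, hs, norm_inv, Real.norm_of_nonneg (kappa0_pos hp).le,
      inv_mul_cancel₀ (kappa0_pos hp).ne']
  · rw [eq_soliton_of_deriv_eq_zero hp hw hw' hs' hs ξ, soliton, sub_eq_add_neg]

/-- **Classification of `H¹` solutions of the transformed autonomous ODE**
(step in the proof of Proposition 1.2).  If `w̄ : ℝ → ℝᵐ` is a nonzero `C²`,
`H¹` solution of `w̄'' + |w̄|^{p-1} w̄ - 4/(p-1)² w̄ = 0`, then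
`w̄(ξ) = κ₀ cosh(ξ+ξ₀)^{-2/(p-1)} Ω` for some `ξ₀ ∈ ℝ` and unit vector `Ω`. -/
theorem ode_classification (p : ℝ) (hp : 1 < p) (m : ℕ) (hm : 2 ≤ m)
    (wb : ℝ → EuclideanSpace ℝ (Fin m))
    (hreg : ContDiff ℝ 2 wb)
    (hL2 : MeasureTheory.Integrable (fun ξ => ‖wb ξ‖ ^ 2))
    (hL2' : MeasureTheory.Integrable (fun ξ => ‖deriv wb ξ‖ ^ 2))
    (heq : ∀ ξ : ℝ,
      deriv (deriv wb) ξ + ‖wb ξ‖ ^ (p - 1) • wb ξ - (4 / (p - 1) ^ 2) • wb ξ = 0)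
    (hne : wb ≠ 0) :
    ∃ (ξ0 : ℝ) (Ω : EuclideanSpace ℝ (Fin m)), ‖Ω‖ = 1 ∧
      ∀ ξ : ℝ, wb ξ = (kappa0 p * Real.cosh (ξ + ξ0) ^ (-(2 / (p - 1)))) • Ω :=
  ode_classification_general p hp m wb hreg hL2 hL2' heq hne
end
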